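/- arXiv:1310.7259 — 6 statements merged into one kernel-verified Lean document; each statement's English description precedes it below -/
import Mathlib

section
/- The Moore determinant det((x_i^{q^j})_{0 ≤ i,j ≤ d-1}) of elements x_0,…,x_{d-1} in an algebraically closed field of characteristic p containing F_q is nonzero if and only if x_0,…,x_{d-1} are linearly independent over F_q. -/
/-!
Since `y ↦ y ^ q` is `𝔽_q`-linear, a relation `∑ c i • x i = 0` yields the left kernel vector `c`
of the Moore matrix. Conversely, a right kernel vector `v` yields the nonzero `q`-polynomial
`∑ v j X ^ q ^ j` of degree at most `q ^ (d - 1)`, which vanishes on the `𝔽_q`-span of the `x i`;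
if the `x i` are independent, this span has `q ^ d` elements, too many roots.
-/

open Polynomial Matrix Finset

def Matrix.moore {R : Type*} [Monoid R] {d : ℕ} (q : ℕ) (x : Fin d → R) :
    Matrix (Fin d) (Fin d) R :=
  Matrix.of fun i j => x i ^ q ^ (j : ℕ)

noncomputable def Polynomial.linearized {R : Type*} [Semiring R] {d : ℕ} (q : ℕ)
    (v : Fin d → R) : R[X] :=
  ∑ j, C (v j) * X ^ q ^ (j : ℕ)

namespace Polynomial

variable {R : Type*} [Semiring R] {d q : ℕ} (v : Fin d → R)

theorem coeff_linearized_pow (hq : 1 < q) (j : Fin d) :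
    (linearized q v).coeff (q ^ (j : ℕ)) = v j := by
  have hinj : Function.Injective fun k : Fin d => q ^ (k : ℕ) :=
    (Nat.pow_right_injective hq).comp Fin.val_injective
  simp only [linearized, finsetSum_coeff, coeff_C_mul, coeff_X_pow]
  rw [Finset.sum_eq_single j (fun k _ hk => by simp [hinj.ne hk.symm]) (by simp)]
  simp

theorem linearized_ne_zero (hq : 1 < q) (hv : v ≠ 0) : linearized q v ≠ 0 := by
  obtain ⟨j, hj⟩ := Function.ne_iff.mp hv
  intro h
  exact hj (by simpa [h] using (coeff_linearized_pow v hq j).symm)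

theorem natDegree_linearized_le (hq : 0 < q) : (linearized q v).natDegree ≤ q ^ (d - 1) := by
  refine natDegree_sum_le_of_forall_le _ _ fun j _ => (natDegree_C_mul_le _ _).trans ?_
  exact (natDegree_X_pow_le _).trans (Nat.pow_le_pow_right hq (by omega))

theorem eval_linearized (y : R) : (linearized q v).eval y = ∑ j, v j * y ^ q ^ (j : ℕ) := by
  simp [linearized, eval_finsetSum]

end Polynomial

namespace Matrix

variable {F K : Type*} [Field F] [Fintype F] [CommRing K] [Algebra F K] {d : ℕ} (x : Fin d → K)

theorem vecMul_moore (c : Fin d → F) :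
    (algebraMap F K ∘ c) ᵥ* moore (Fintype.card F) x =
      fun j : Fin d => Fintype.linearCombination F x c ^ Fintype.card F ^ (j : ℕ) := by
  ext j
  have hfrob : ∀ y : K,
      (FiniteField.frobeniusAlgHom F K ^ (j : ℕ)) y = y ^ Fintype.card F ^ (j : ℕ) := fun y => by
    rw [AlgHom.coe_pow, FiniteField.coe_frobeniusAlgHom, pow_iterate]
  rw [← hfrob, Fintype.linearCombination_apply, map_sum]
  simp_rw [map_smul, hfrob]
  simp only [vecMul, dotProduct, moore, of_apply, Function.comp_apply, Algebra.smul_def]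

theorem eval_linearized_linearCombination (v : Fin d → K) (c : Fin d → F) :
    (linearized (Fintype.card F) v).eval (Fintype.linearCombination F x c) =
      (algebraMap F K ∘ c) ⬝ᵥ (moore (Fintype.card F) x *ᵥ v) := by
  rw [dotProduct_mulVec, vecMul_moore, eval_linearized, dotProduct_comm]
  rfl

theorem linearIndependent_of_det_moore_ne_zero [IsDomain K]
    (h : (moore (Fintype.card F) x).det ≠ 0) : LinearIndependent F x := by
  rw [Fintype.linearIndependent_iff]
  intro c hc
  have hvecMul : (algebraMap F K ∘ c) ᵥ* moore (Fintype.card F) x = 0 := by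
    ext j
    rw [vecMul_moore, Fintype.linearCombination_apply, hc]
    exact zero_pow (pow_ne_zero _ Fintype.card_ne_zero)
  have hc0 : algebraMap F K ∘ c = 0 := by
    by_contra hne
    exact h (exists_vecMul_eq_zero_iff.mp ⟨_, hne, hvecMul⟩)
  exact fun i => (algebraMap F K).injective (by simpa using congrFun hc0 i)

theorem det_moore_ne_zero_of_linearIndependent [IsDomain K] (h : LinearIndependent F x) :
    (moore (Fintype.card F) x).det ≠ 0 := by
  classical
  intro hdet
  obtain ⟨v, hv0, hv⟩ := exists_mulVec_eq_zero_iff.mpr hdet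
  have hq : 1 < Fintype.card F := Fintype.one_lt_card
  have hd : d ≠ 0 := by
    rintro rfl
    exact hv0 (Subsingleton.elim _ _)
  have hroots : (univ.image (Fintype.linearCombination F x)).val ⊆
      (linearized (Fintype.card F) v).roots := by
    intro y hy
    obtain ⟨c, -, rfl⟩ := mem_image.mp hy
    rw [mem_roots (linearized_ne_zero v hq hv0), IsRoot, eval_linearized_linearCombination, hv,
      dotProduct_zero]
  have hcard := (card_le_degree_of_subset_roots hroots).trans (natDegree_linearized_le v hq.le)
  rw [card_image_of_injective _ (linearIndependent_iff_injective_fintypeLinearCombination.mp h),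
    card_univ, Fintype.card_fun, Fintype.card_fin] at hcard
  have := (Nat.pow_le_pow_iff_right hq).mp hcard
  omega

theorem det_moore_ne_zero_iff [IsDomain K] :
    (moore (Fintype.card F) x).det ≠ 0 ↔ LinearIndependent F x :=
  ⟨linearIndependent_of_det_moore_ne_zero x, det_moore_ne_zero_of_linearIndependent x⟩

end Matrix

theorem moore_det_ne_zero_iff_linearIndependent_general
    (p n d : ℕ) [Fact p.Prime] (hn : 0 < n)
    (K : Type*) [Field K]
    [Algebra (GaloisField p n) K] (x : Fin d → K) :
    Matrix.det (Matrix.of fun i j : Fin d => x i ^ (p ^ n) ^ (j : ℕ)) ≠ 0 ↔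
      LinearIndependent (GaloisField p n) x := by
  have := Fintype.ofFinite (GaloisField p n)
  have hq : Fintype.card (GaloisField p n) = p ^ n := by
    rw [← Nat.card_eq_fintype_card, GaloisField.card p n hn.ne']
  rw [← hq]
  exact det_moore_ne_zero_iff x

/-- **Moore determinant criterion.**  Let `q = p^n` be a prime power, `K` an algebraically
closed field of characteristic `p` containing `F_q = GaloisField p n`.  The Moore determinant
`det ((x i ^ q ^ j))` of elements `x 0, …, x (d-1)` of `K` is nonzero iff the `x i` are
linearly independent over `F_q`. -/
theorem moore_det_ne_zero_iff_linearIndependent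
    (p n d : ℕ) [Fact p.Prime] (hn : 0 < n)
    (K : Type*) [Field K] [IsAlgClosed K] [CharP K p]
    [Algebra (GaloisField p n) K] (x : Fin d → K) :
    Matrix.det (Matrix.of fun i j : Fin d => x i ^ (p ^ n) ^ (j : ℕ)) ≠ 0 ↔
      LinearIndependent (GaloisField p n) x :=
  moore_det_ne_zero_iff_linearIndependent_general p n d hn K x
end

section
/- Let δ_d(y_1,…,y_{d-1}) = det(M)^{q-1} where M is the d×d matrix whose rows are (1, y_1, y_1y_2, …, y_1⋯y_{d-1}) raised to the successive q-power Frobenius (row k has entries (y_1⋯y_j)^{q^k} for j = 0,…,d-1). Then for each fixed i ∈ {1,…,d-1}, there is a nonzero constant C ∈ F_q^× such that δ_d(y_1,…,y_{d-1}) = C · (y_1⋯y_i)^{q^{d-i}-1} · δ_{d-i}(y_{i+1},…,y_{d-1}) · δ_{d,i}(y_1,…,y_{d-1}), where δ_{d,i} is the product of a_0 + a_1 y_1 + ⋯ + a_{d-1} y_1⋯y_{d-1} over all nonzero (a_0,…,a_{d-1}) ∈ F_q^d with a_j ≠ 0 for some j < i. -/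
/-!
Over `K = F_q`, the Moore determinant `det (z_j ^ q^k)` is, up to a nonzero constant, the product
of the linear forms `∑ a_j z_j` over one representative `a` of each point of `ℙ(K^m)`.  It suffices
to see this for the generic family `z_j = X_j`: each form divides the determinant (replacing row
`k` by the combination of rows with coefficients `a` produces the row of `q^e`-th powers of the
form), distinct points give non-associated irreducible forms, and both sides are homogeneous of
degree `∑ q^k`.  Raising to the power `q - 1` turns this into the product over all nonzero `a`.
For `z_j = y_1⋯y_j`, the forms with `a_0 = ⋯ = a_{i-1} = 0` are `y_1⋯y_i` times the forms of the
shifted family `y_{i+1}⋯`, so `δ_{d-i}` splits off from `δ_d`.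
-/

open MvPolynomial

/-- The quantity `δ = det((z j ^ q^k))^(q-1)` attached to a family `z`. -/
noncomputable def mooreDelta {R : Type*} [CommRing R] (q : ℕ) {m : ℕ} (z : Fin m → R) : R :=
  (Matrix.det (Matrix.of fun j k : Fin m => z j ^ q ^ (k : ℕ))) ^ (q - 1)

open Finset
open scoped LinearAlgebra.Projectivization

namespace MvPolynomial

variable {σ R n : Type*} [CommRing R] [Fintype n] [DecidableEq n]

theorem IsHomogeneous.det {M : Matrix n n (MvPolynomial σ R)} {w : n → ℕ}
    (h : ∀ j k, (M j k).IsHomogeneous (w k)) : M.det.IsHomogeneous (∑ k, w k) := by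
  rw [Matrix.det_apply]
  refine IsHomogeneous.sum _ _ _ fun τ _ => ?_
  rw [← mem_homogeneousSubmodule] at *
  exact zsmul_mem ((mem_homogeneousSubmodule _ _).mpr
    (IsHomogeneous.prod _ _ _ fun k _ => h (τ k) k)) _

theorem coeff_det_X_pow {e : n → ℕ} (he : e.Injective) :
    coeff (∑ k, Finsupp.single k (e k))
      (Matrix.of fun j k => (X j : MvPolynomial n R) ^ e k).det = 1 := by
  have hterm (τ : Equiv.Perm n) : ∏ k, (X (τ k) : MvPolynomial n R) ^ e k
      = monomial (∑ k, Finsupp.single (τ k) (e k)) 1 := by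
    simp only [X_pow_eq_monomial, monomial_sum_one]
  have hdiag (τ : Equiv.Perm n)
      (hτ : ∑ k, Finsupp.single (τ k) (e k) = ∑ k, Finsupp.single k (e k)) : τ = 1 := by
    ext k
    have hk := DFunLike.congr_fun hτ (τ k)
    simp only [Finsupp.coe_finsetSum, Finset.sum_apply, Finsupp.single_apply,
      τ.injective.eq_iff, sum_ite_eq', mem_univ, ↓reduceIte] at hk
    simpa using congrArg τ (he hk).symm
  rw [Matrix.det_apply, coeff_sum, sum_eq_single (1 : Equiv.Perm n)]
  · simp only [Matrix.of_apply]
    rw [hterm]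
    simp
  · intro τ _ hτ
    simp only [Matrix.of_apply, hterm, Units.smul_def, coeff_smul, coeff_monomial]
    rw [if_neg (fun h => hτ (hdiag τ h)), smul_zero]
  · simp

end MvPolynomial

def mooreMatrix {R : Type*} [CommRing R] (q : ℕ) {m : ℕ} (z : Fin m → R) :
    Matrix (Fin m) (Fin m) R :=
  Matrix.of fun j k => z j ^ q ^ (k : ℕ)

section FrobeniusRows

variable (K : Type*) {R : Type*} [Field K] [Fintype K] [CommRing R] [Algebra K R] {m : ℕ}

theorem Fintype.linearCombination_pow_card_pow (z : Fin m → R) (a : Fin m → K) (e : ℕ) :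
    Fintype.linearCombination K z a ^ Fintype.card K ^ e
      = Fintype.linearCombination K (fun j => z j ^ Fintype.card K ^ e) a := by
  induction e with
  | zero => simp
  | succ e ih =>
    rw [pow_succ, pow_mul, ih, ← FiniteField.frobeniusAlgHom_apply,
      Fintype.linearCombination_apply, Fintype.linearCombination_apply, map_sum]
    simp [pow_mul]

theorem linearCombination_dvd_det_mooreMatrix (z : Fin m → R) {a : Fin m → K} (ha : a ≠ 0) :
    Fintype.linearCombination K z a ∣ (mooreMatrix (Fintype.card K) z).det := by
  obtain ⟨k, hk⟩ := Function.ne_iff.mp ha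
  set M := mooreMatrix (Fintype.card K) z
  set L := Fintype.linearCombination K z a
  have hrow : ∑ j, algebraMap K R (a j) • M j
      = L • fun e : Fin m => L ^ (Fintype.card K ^ (e : ℕ) - 1) := by
    ext e
    simp only [Finset.sum_apply, Pi.smul_apply, smul_eq_mul, ← pow_succ']
    rw [Nat.sub_add_cancel (Nat.one_le_pow _ _ Fintype.card_pos),
      Fintype.linearCombination_pow_card_pow, Fintype.linearCombination_apply]
    simp [M, mooreMatrix, Algebra.smul_def]
  have hdet := Matrix.det_updateRow_sum M k fun j => algebraMap K R (a j)
  rw [hrow, Matrix.det_updateRow_smul, smul_eq_mul] at hdet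
  exact ((Ne.isUnit hk).map (algebraMap K R)).dvd_mul_left.mp ⟨_, hdet.symm⟩

end FrobeniusRows

theorem prod_ne_zero_eq_prod_projectivization {K V M : Type*} [DivisionRing K] [Fintype K]
    [DecidableEq K] [AddCommGroup V] [Module K V] [Fintype V] [DecidableEq V] [Fintype (ℙ K V)]
    [CommMonoid M] (f : V → M) :
    ∏ v ∈ univ.filter (· ≠ 0), f v = ∏ x : ℙ K V, ∏ c : Kˣ, f (c • x.rep) := by
  rw [← Fintype.prod_prod_type']
  symm
  refine prod_bij (fun xc _ => xc.2 • xc.1.rep) (fun xc _ => ?_)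
    (fun ⟨x, c⟩ _ ⟨y, d⟩ _ h => ?_) (fun v hv => ?_) (fun _ _ => rfl)
  · simpa [smul_ne_zero_iff_ne] using xc.1.rep_nonzero
  · dsimp only at h
    obtain rfl : x = y := by
      rw [← x.mk_rep, ← y.mk_rep, Projectivization.mk_eq_mk_iff']
      exact ⟨((c⁻¹ * d : Kˣ) : K), by rw [← Units.smul_def, mul_smul, ← h, inv_smul_smul]⟩
    rw [Prod.mk.injEq, Units.ext_iff]
    exact ⟨rfl, smul_left_injective K x.rep_nonzero h⟩
  · have hv : v ≠ 0 := (mem_filter.mp hv).2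
    obtain ⟨a, ha⟩ := Projectivization.exists_smul_eq_mk_rep K v hv
    exact ⟨(Projectivization.mk K v hv, a⁻¹), mem_univ _, by simp [← ha]⟩

namespace MvPolynomial

variable {K n : Type*} [Field K] [Fintype n]

theorem coeff_single_linearCombination_X (a : n → K) (j : n) :
    coeff (Finsupp.single j 1) (Fintype.linearCombination K X a) = a j := by
  classical
  simp [Fintype.linearCombination_apply, coeff_sum, coeff_X, Finsupp.single_left_inj]

theorem isHomogeneous_linearCombination_X (a : n → K) :
    (Fintype.linearCombination K X a : MvPolynomial n K).IsHomogeneous 1 := by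
  rw [← mem_homogeneousSubmodule, Fintype.linearCombination_apply]
  exact Submodule.sum_mem _ fun j _ =>
    Submodule.smul_mem _ _ ((mem_homogeneousSubmodule _ _).mpr (isHomogeneous_X K j))

theorem linearCombination_X_ne_zero {a : n → K} (ha : a ≠ 0) :
    (Fintype.linearCombination K X a : MvPolynomial n K) ≠ 0 := by
  obtain ⟨j, hj⟩ := Function.ne_iff.mp ha
  intro h
  exact hj (by simpa [h] using (coeff_single_linearCombination_X a j).symm)

theorem totalDegree_linearCombination_X {a : n → K} (ha : a ≠ 0) :
    (Fintype.linearCombination K X a : MvPolynomial n K).totalDegree = 1 :=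
  (isHomogeneous_linearCombination_X a).totalDegree (linearCombination_X_ne_zero ha)

theorem irreducible_linearCombination_X {a : n → K} (ha : a ≠ 0) :
    Irreducible (Fintype.linearCombination K X a : MvPolynomial n K) := by
  refine irreducible_of_totalDegree_eq_one (totalDegree_linearCombination_X ha) fun r hr => ?_
  obtain ⟨j, hj⟩ := Function.ne_iff.mp ha
  have hrj := hr (Finsupp.single j 1)
  rw [coeff_single_linearCombination_X] at hrj
  exact (ne_zero_of_dvd_ne_zero hj hrj).isUnit

theorem exists_smul_eq_of_linearCombination_X_dvd {a b : n → K} (ha : a ≠ 0) (hb : b ≠ 0)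
    (h : (Fintype.linearCombination K X a : MvPolynomial n K) ∣ Fintype.linearCombination K X b) :
    ∃ c : K, c • a = b := by
  obtain ⟨r, hr⟩ := h
  have hr0 : r ≠ 0 := by rintro rfl; exact linearCombination_X_ne_zero hb (by simpa using hr)
  have hdeg := congrArg totalDegree hr
  rw [totalDegree_mul_of_isDomain (linearCombination_X_ne_zero ha) hr0,
    totalDegree_linearCombination_X ha, totalDegree_linearCombination_X hb] at hdeg
  have hrC := totalDegree_eq_zero_iff_eq_C.mp (by omega : r.totalDegree = 0)
  refine ⟨coeff 0 r, ?_⟩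
  ext j
  have hj := congrArg (coeff (Finsupp.single j 1)) hr
  rwa [hrC, mul_comm, coeff_C_mul, coeff_single_linearCombination_X,
    coeff_single_linearCombination_X, eq_comm] at hj

end MvPolynomial

section Moore

variable (K : Type*) [Field K] [Fintype K] {R : Type*} [CommRing R] [Algebra K R] {m : ℕ}

theorem det_mooreMatrix_X_eq [Fintype (ℙ K (Fin m → K))] :
    ∃ s : K, s ≠ 0 ∧ (mooreMatrix (Fintype.card K) (X : Fin m → MvPolynomial (Fin m) K)).det
      = C s * ∏ x : ℙ K (Fin m → K), Fintype.linearCombination K X x.rep := by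
  set q := Fintype.card K
  set D := (mooreMatrix q (X : Fin m → MvPolynomial (Fin m) K)).det
  set P := ∏ x : ℙ K (Fin m → K), (Fintype.linearCombination K X x.rep : MvPolynomial (Fin m) K)
  have hdvd : P ∣ D := by
    refine Fintype.prod_dvd_of_isRelPrime (fun x y hxy => ?_)
      fun x => linearCombination_dvd_det_mooreMatrix K X x.rep_nonzero
    refine (irreducible_linearCombination_X x.rep_nonzero).isRelPrime_iff_not_dvd.mpr
      fun h => hxy ?_
    obtain ⟨c, hc⟩ := exists_smul_eq_of_linearCombination_X_dvd x.rep_nonzero y.rep_nonzero h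
    rw [← x.mk_rep, ← y.mk_rep, eq_comm, Projectivization.mk_eq_mk_iff']
    exact ⟨c, hc⟩
  have hcard : Fintype.card (ℙ K (Fin m → K)) = ∑ k : Fin m, q ^ (k : ℕ) := by
    rw [← Nat.card_eq_fintype_card,
      Projectivization.card_of_finrank K _ (Module.finrank_fin_fun K),
      Fin.sum_univ_eq_sum_range (q ^ ·), Nat.card_eq_fintype_card]
  have hD : D.IsHomogeneous (∑ k : Fin m, q ^ (k : ℕ)) :=
    IsHomogeneous.det fun j k => isHomogeneous_X_pow _ _
  have hP : P.IsHomogeneous (∑ k : Fin m, q ^ (k : ℕ)) := by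
    simpa [hcard] using IsHomogeneous.prod univ _ (fun _ => 1)
      fun (x : ℙ K (Fin m → K)) _ => isHomogeneous_linearCombination_X x.rep
  have hD0 : D ≠ 0 := by
    have h1 : coeff _ D = 1 := coeff_det_X_pow (e := fun k : Fin m => q ^ (k : ℕ))
      ((Nat.pow_right_injective Fintype.one_lt_card).comp Fin.val_injective)
    intro h
    rw [h, coeff_zero] at h1
    exact zero_ne_one h1
  have hP0 : P ≠ 0 := prod_ne_zero_iff.mpr fun x _ => linearCombination_X_ne_zero x.rep_nonzero
  obtain ⟨r, hr⟩ := hdvd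
  have hr0 : r ≠ 0 := by rintro rfl; exact hD0 (by rw [hr, mul_zero])
  have hdeg := congrArg totalDegree hr
  rw [totalDegree_mul_of_isDomain hP0 hr0, hD.totalDegree hD0, hP.totalDegree hP0] at hdeg
  have hrC := totalDegree_eq_zero_iff_eq_C.mp (by omega : r.totalDegree = 0)
  exact ⟨coeff 0 r, fun h0 => hr0 (by rw [hrC, h0, C_0]),
    by rw [hr, mul_comm]; exact congrArg (· * P) hrC⟩

theorem det_mooreMatrix_eq [Fintype (ℙ K (Fin m → K))] (z : Fin m → R) :
    ∃ s : K, s ≠ 0 ∧ (mooreMatrix (Fintype.card K) z).det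
      = algebraMap K R s * ∏ x : ℙ K (Fin m → K), Fintype.linearCombination K z x.rep := by
  obtain ⟨s, hs, h⟩ := det_mooreMatrix_X_eq K (m := m)
  refine ⟨s, hs, ?_⟩
  have hz : (aeval z).mapMatrix (mooreMatrix (Fintype.card K) (X : Fin m → MvPolynomial (Fin m) K))
      = mooreMatrix (Fintype.card K) z := by
    ext j k
    simp [mooreMatrix]
  have hL (a : Fin m → K) :
      aeval z (Fintype.linearCombination K (X : Fin m → MvPolynomial (Fin m) K) a)
        = Fintype.linearCombination K z a := by
    simp [Fintype.linearCombination_apply]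
  rw [← hz, ← AlgHom.map_det]
  simpa [hL] using congrArg (aeval z) h

theorem mooreDelta_eq [DecidableEq K] (z : Fin m → R) :
    ∃ u : K, u ≠ 0 ∧ mooreDelta (Fintype.card K) z
      = algebraMap K R u * ∏ v ∈ univ.filter (· ≠ 0), Fintype.linearCombination K z v := by
  have := Fintype.ofFinite (ℙ K (Fin m → K))
  obtain ⟨s, hs, h⟩ := det_mooreMatrix_eq K z
  set q := Fintype.card K
  set P := ∏ x : ℙ K (Fin m → K), Fintype.linearCombination K z x.rep
  set W := (∏ c : Kˣ, (c : K)) ^ Fintype.card (ℙ K (Fin m → K))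
  have hW : W ≠ 0 := pow_ne_zero _ (prod_ne_zero_iff.mpr fun c _ => c.ne_zero)
  have hprod : ∏ v ∈ univ.filter (· ≠ 0), Fintype.linearCombination K z v
      = algebraMap K R W * P ^ (q - 1) := by
    rw [prod_ne_zero_eq_prod_projectivization (K := K)]
    simp_rw [Units.smul_def, map_smul, Algebra.smul_def]
    simp [prod_mul_distrib, Fintype.card_units, prod_pow, W, P, q]
  have hWinv : algebraMap K R W⁻¹ * algebraMap K R W = 1 := by
    rw [← map_mul, inv_mul_cancel₀ hW, map_one]
  refine ⟨s ^ (q - 1) * W⁻¹, mul_ne_zero (pow_ne_zero _ hs) (inv_ne_zero hW), ?_⟩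
  rw [mooreDelta, ← mooreMatrix, h, hprod, map_mul, map_pow]
  linear_combination (-(algebraMap K R s ^ (q - 1) * P ^ (q - 1))) * hWinv

end Moore

theorem finprod_cond_eq_prod_filter {α M : Type*} [Fintype α] [CommMonoid M] (p : α → Prop)
    [DecidablePred p] (f : α → M) : ∏ᶠ (a) (_ : p a), f a = ∏ a ∈ univ.filter p, f a :=
  finprod_cond_eq_prod_of_cond_iff f fun _ => by simp only [mem_filter, mem_univ, true_and]

theorem Fin.prod_filter_val_lt_eq_mul {M : Type*} [CommMonoid M] {N a b : ℕ} (hab : a ≤ b)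
    (f : Fin N → M) :
    ∏ t ∈ univ.filter (fun t : Fin N => (t : ℕ) < b), f t =
      (∏ t ∈ univ.filter (fun t : Fin N => (t : ℕ) < a), f t) *
        ∏ t ∈ univ.filter (fun t : Fin N => a ≤ (t : ℕ) ∧ (t : ℕ) < b), f t := by
  rw [← prod_filter_mul_prod_filter_not _ (fun t : Fin N => (t : ℕ) < a), filter_filter,
    filter_filter]
  congr 2 <;> ext t <;> simp only [mem_filter, mem_univ, true_and] <;> omega

theorem prod_filter_ne_zero_eq_mul_prod_append_zero {K M : Type*} [Zero K] [DecidableEq K]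
    [Fintype K] [CommMonoid M] {i k : ℕ} (f : (Fin (i + k) → K) → M) :
    ∏ v ∈ univ.filter (· ≠ 0), f v =
      (∏ v ∈ univ.filter (fun v => v ≠ 0 ∧ ∃ j : Fin (i + k), (j : ℕ) < i ∧ v j ≠ 0), f v) *
        ∏ b ∈ univ.filter (fun b : Fin k → K => b ≠ 0), f (Fin.append 0 b) := by
  rw [← prod_filter_mul_prod_filter_not _ (fun v => ∃ j : Fin (i + k), (j : ℕ) < i ∧ v j ≠ 0),
    filter_filter, filter_filter]
  congr 1
  have hinv (v : Fin (i + k) → K) (hv : ∀ j : Fin (i + k), (j : ℕ) < i → v j = 0) :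
      Fin.append 0 (fun s => v (Fin.natAdd i s)) = v := by
    ext j
    induction j using Fin.addCases with
    | left j => rw [Fin.append_left, Pi.zero_apply, hv _ j.isLt]
    | right s => rw [Fin.append_right]
  symm
  refine prod_nbij' (Fin.append 0) (fun v s => v (Fin.natAdd i s)) (fun b hb => ?_)
    (fun v hv => ?_) (fun b _ => funext (Fin.append_right 0 b)) (fun v hv => ?_) fun _ _ => rfl
  all_goals simp only [mem_filter, mem_univ, true_and, not_exists, not_and, not_not] at *
  · refine ⟨fun h => hb (funext fun s => by simpa using congrFun h (Fin.natAdd i s)),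
      fun j hj => ?_⟩
    rw [show j = Fin.castAdd k ⟨j, hj⟩ from rfl, Fin.append_left, Pi.zero_apply]
  · refine fun h => hv.1 (funext fun j => ?_)
    induction j using Fin.addCases with
    | left j => exact hv.2 _ j.isLt
    | right s => exact congrFun h s
  · exact hinv v hv.2

theorem Fintype.linearCombination_append_zero {R M : Type*} [Semiring R] [AddCommMonoid M]
    [Module R M] {i k : ℕ} (z : Fin (i + k) → M) (b : Fin k → R) :
    Fintype.linearCombination R z (Fin.append 0 b)
      = Fintype.linearCombination R (fun s => z (Fin.natAdd i s)) b := by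
  simp [Fintype.linearCombination_apply, Fin.sum_univ_add]

theorem prod_linearCombination_append_zero {K R : Type*} [Field K] [Fintype K] [DecidableEq K]
    [CommRing R] [Algebra K R] {i k : ℕ} {z : Fin (i + k) → R} {c : R} {w : Fin k → R}
    (hz : ∀ s, z (Fin.natAdd i s) = c * w s) :
    ∏ b ∈ univ.filter (fun b : Fin k → K => b ≠ 0), Fintype.linearCombination K z (Fin.append 0 b)
      = c ^ (Fintype.card K ^ k - 1) *
        ∏ b ∈ univ.filter (fun b : Fin k → K => b ≠ 0), Fintype.linearCombination K w b := by
  have hL (b : Fin k → K) :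
      Fintype.linearCombination K z (Fin.append 0 b) = c * Fintype.linearCombination K w b := by
    rw [Fintype.linearCombination_append_zero]
    simp only [hz, Fintype.linearCombination_apply, mul_sum, mul_smul_comm]
  rw [prod_congr rfl fun b _ => hL b, prod_mul_distrib, prod_const, filter_ne' univ 0,
    card_erase_of_mem (mem_univ _), card_univ, Fintype.card_fun, Fintype.card_fin]

theorem delta_factorization_general
    (p n d i : ℕ) [Fact p.Prime] (hn : 0 < n) (hid : i ≤ d - 1) :
    ∃ Cst : GaloisField p n, Cst ≠ 0 ∧
      mooreDelta (p ^ n)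
          (fun j : Fin d => ∏ t ∈ Finset.univ.filter (fun t : Fin (d-1) => (t : ℕ) < (j : ℕ)),
            (X t : MvPolynomial (Fin (d-1)) (GaloisField p n))) =
        C Cst *
          (∏ t ∈ Finset.univ.filter (fun t : Fin (d-1) => (t : ℕ) < i),
            (X t : MvPolynomial (Fin (d-1)) (GaloisField p n))) ^ ((p ^ n) ^ (d - i) - 1) *
          mooreDelta (p ^ n)
            (fun j : Fin (d - i) =>
              ∏ t ∈ Finset.univ.filter
                  (fun t : Fin (d-1) => i ≤ (t : ℕ) ∧ (t : ℕ) < i + (j : ℕ)),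
                (X t : MvPolynomial (Fin (d-1)) (GaloisField p n))) *
          ∏ᶠ (a : Fin d → GaloisField p n)
              (_ : a ≠ 0 ∧ ∃ j : Fin d, (j : ℕ) < i ∧ a j ≠ 0),
            ∑ j : Fin d, C (a j) *
              ∏ t ∈ Finset.univ.filter (fun t : Fin (d-1) => (t : ℕ) < (j : ℕ)),
                (X t : MvPolynomial (Fin (d-1)) (GaloisField p n)) := by
  classical
  have := Fintype.ofFinite (GaloisField p n)
  have hq : Fintype.card (GaloisField p n) = p ^ n := by
    rw [← Nat.card_eq_fintype_card, GaloisField.card p n hn.ne']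
  obtain ⟨k, rfl⟩ : ∃ k, d = i + k := ⟨d - i, by omega⟩
  rw [Nat.add_sub_cancel_left]
  set z : Fin (i + k) → MvPolynomial (Fin (i + k - 1)) (GaloisField p n) :=
    fun j => ∏ t ∈ univ.filter (fun t : Fin (i + k - 1) => (t : ℕ) < (j : ℕ)), X t
  set w : Fin k → MvPolynomial (Fin (i + k - 1)) (GaloisField p n) := fun s =>
    ∏ t ∈ univ.filter (fun t : Fin (i + k - 1) => i ≤ (t : ℕ) ∧ (t : ℕ) < i + (s : ℕ)), X t
  set Z := ∏ t ∈ univ.filter (fun t : Fin (i + k - 1) => (t : ℕ) < i),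
    (X t : MvPolynomial (Fin (i + k - 1)) (GaloisField p n))
  have hz (s : Fin k) : z (Fin.natAdd i s) = Z * w s :=
    Fin.prod_filter_val_lt_eq_mul (Nat.le_add_right i s) _
  obtain ⟨u, hu, hδz⟩ := mooreDelta_eq (GaloisField p n) z
  obtain ⟨v, hv, hδw⟩ := mooreDelta_eq (GaloisField p n) w
  refine ⟨u * v⁻¹, mul_ne_zero hu (inv_ne_zero hv), ?_⟩
  rw [finprod_cond_eq_prod_filter]
  simp only [C_mul', ← Fintype.linearCombination_apply]
  rw [← hq, hδz, hδw, prod_filter_ne_zero_eq_mul_prod_append_zero,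
    prod_linearCombination_append_zero hz, algebraMap_eq, smul_eq_C_mul]
  have hC : C (u * v⁻¹) * C v = (C u : MvPolynomial (Fin (i + k - 1)) (GaloisField p n)) := by
    rw [← map_mul, inv_mul_cancel_right₀ hv]
  rw [← hC]
  ring

/-- **Factorization of `δ_d`.**  In `F_q[y_1,…,y_{d-1}]`, with `z_j = y_1⋯y_j`,
`δ_d = det((z_j^{q^k}))^{q-1}` factors, for each `1 ≤ i ≤ d-1`, as a nonzero constant times
`(y_1⋯y_i)^{q^{d-i}-1} · δ_{d-i}(y_{i+1},…,y_{d-1}) · δ_{d,i}`, where `δ_{d,i}` is the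
product of the linear forms `a_0 + a_1 y_1 + ⋯ + a_{d-1} y_1⋯y_{d-1}` over all nonzero
`a ∈ F_q^d` with `a_j ≠ 0` for some `j < i`. -/
theorem delta_factorization
    (p n d i : ℕ) [Fact p.Prime] (hn : 0 < n) (hi : 1 ≤ i) (hid : i ≤ d - 1) :
    ∃ Cst : GaloisField p n, Cst ≠ 0 ∧
      mooreDelta (p ^ n)
          (fun j : Fin d => ∏ t ∈ Finset.univ.filter (fun t : Fin (d-1) => (t : ℕ) < (j : ℕ)),
            (X t : MvPolynomial (Fin (d-1)) (GaloisField p n))) =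
        C Cst *
          (∏ t ∈ Finset.univ.filter (fun t : Fin (d-1) => (t : ℕ) < i),
            (X t : MvPolynomial (Fin (d-1)) (GaloisField p n))) ^ ((p ^ n) ^ (d - i) - 1) *
          mooreDelta (p ^ n)
            (fun j : Fin (d - i) =>
              ∏ t ∈ Finset.univ.filter
                  (fun t : Fin (d-1) => i ≤ (t : ℕ) ∧ (t : ℕ) < i + (j : ℕ)),
                (X t : MvPolynomial (Fin (d-1)) (GaloisField p n))) *
          ∏ᶠ (a : Fin d → GaloisField p n)
              (_ : a ≠ 0 ∧ ∃ j : Fin d, (j : ℕ) < i ∧ a j ≠ 0),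
            ∑ j : Fin d, C (a j) *
              ∏ t ∈ Finset.univ.filter (fun t : Fin (d-1) => (t : ℕ) < (j : ℕ)),
                (X t : MvPolynomial (Fin (d-1)) (GaloisField p n)) :=
  delta_factorization_general p n d i hn hid
end

section
/- With δ_{d,i} defined as the product of a_0 + a_1 y_1 + ⋯ + a_{d-1} y_1⋯y_{d-1} over all nonzero (a_0,…,a_{d-1}) ∈ F_q^d having a_j ≠ 0 for some j < i, one has the congruence δ_{d,i} ≡ δ_i(y_1,…,y_{i-1})^{q^{d-i}} modulo the ideal (y_i) in F_q[y_1,…,y_{d-1}]. -/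
open MvPolynomial Finset

/-!
Modulo `y_i`, every monomial `a_j y_1⋯y_j` with `j ≥ i` vanishes, so each factor of `δ_{d,i}`
reduces to the form `a_0 + a_1 y_1 + ⋯ + a_{i-1} y_1⋯y_{i-1}` of the truncation
`(a_0, …, a_{i-1})`, which is nonzero exactly when `a` satisfies the side condition. Every
nonzero `b ∈ F_q^i` is the truncation of exactly `q^{d-i}` vectors `a ∈ F_q^d`.
-/

/-- `a_0 + a_1 y_1 + a_2 y_1 y_2 + ⋯`, where `y_{t+1}` is `X t`. -/
noncomputable def hornerForm {R : Type*} [CommSemiring R] (m : ℕ) {d : ℕ} (a : Fin d → R) :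
    MvPolynomial (Fin m) R :=
  ∑ j : Fin d, C (a j) * ∏ t ∈ univ.filter (fun t : Fin m => (t : ℕ) < (j : ℕ)), X t

theorem hornerForm_sub_hornerForm_castLE_mem_span {R : Type*} [CommRing R] {m d i : ℕ}
    (h : i ≤ d) (a : Fin d → R) {v : Fin m} (hv : (v : ℕ) < i) :
    hornerForm m a - hornerForm m (fun j => a (Fin.castLE h j)) ∈ Ideal.span {X v} := by
  classical
  have hsplit := sum_filter_add_sum_filter_not univ (fun j : Fin d => (j : ℕ) < i)
    fun j => C (a j) * ∏ t ∈ univ.filter (fun t : Fin m => (t : ℕ) < (j : ℕ)), X t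
  have hlow : univ.filter (fun j : Fin d => (j : ℕ) < i) = univ.map (Fin.castLEEmb h) := by
    ext j
    simp only [mem_filter, mem_univ, true_and, mem_map, Fin.castLEEmb_apply]
    exact ⟨fun hj => ⟨⟨j, hj⟩, rfl⟩, by rintro ⟨j, rfl⟩; exact j.is_lt⟩
  rw [hornerForm, hornerForm, ← hsplit, hlow, sum_map]
  simp only [Fin.castLEEmb_apply, Fin.val_castLE]
  rw [add_sub_cancel_left]
  refine Ideal.sum_mem _ fun j hj => Ideal.mul_mem_left _ (C (a j)) ?_
  rw [Ideal.mem_span_singleton]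
  refine dvd_prod_of_mem _ ?_
  simp only [mem_filter, mem_univ, true_and, not_lt] at hj ⊢
  omega

theorem comp_castLE_ne_zero_iff {M : Type*} [Zero M] {i d : ℕ} (h : i ≤ d) (a : Fin d → M) :
    (fun j => a (Fin.castLE h j)) ≠ 0 ↔ ∃ j : Fin d, (j : ℕ) < i ∧ a j ≠ 0 := by
  simp only [ne_eq, funext_iff, Pi.zero_apply, not_forall]
  constructor
  · rintro ⟨j, hj⟩
    exact ⟨Fin.castLE h j, j.is_lt, hj⟩
  · rintro ⟨j, hj, hja⟩
    exact ⟨⟨j, hj⟩, hja⟩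

theorem prod_filter_comp_castLE {K M : Type*} [Fintype K] [CommMonoid M] {i d : ℕ} (h : i ≤ d)
    (p : (Fin i → K) → Prop) [DecidablePred p] (f : (Fin i → K) → M) :
    ∏ a ∈ univ.filter (fun a : Fin d → K => p fun j => a (Fin.castLE h j)),
        f (fun j => a (Fin.castLE h j)) =
      (∏ b ∈ univ.filter p, f b) ^ Fintype.card K ^ (d - i) := by
  obtain ⟨k, rfl⟩ := Nat.exists_eq_add_of_le h
  set g : (Fin i → K) → M := fun b => if p b then f b else 1
  calc ∏ a ∈ univ.filter (fun a : Fin (i + k) → K => p fun j => a (Fin.castLE h j)),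
        f (fun j => a (Fin.castLE h j))
      = ∏ a : Fin (i + k) → K, g fun j => a (Fin.castLE h j) := prod_filter _ _
    _ = ∏ x : (Fin i → K) × (Fin k → K), g x.1 :=
        Fintype.prod_equiv (Fin.appendEquiv i k).symm _ _ fun _ => rfl
    _ = ∏ b, g b ^ Fintype.card (Fin k → K) := by
        simp only [Fintype.prod_prod_type, prod_const, card_univ]
    _ = _ := by
        rw [prod_pow, Fintype.card_fun, Fintype.card_fin, Nat.add_sub_cancel_left, prod_filter]

theorem finprod_hornerForm_sub_pow_mem_span {K : Type*} [CommRing K] [Fintype K] {m d i : ℕ}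
    (h : i ≤ d) {v : Fin m} (hv : (v : ℕ) < i) :
    (∏ᶠ (a : Fin d → K) (_ : a ≠ 0 ∧ ∃ j : Fin d, (j : ℕ) < i ∧ a j ≠ 0), hornerForm m a) -
        (∏ᶠ (b : Fin i → K) (_ : b ≠ 0), hornerForm m b) ^ (Fintype.card K ^ (d - i)) ∈
      Ideal.span {X v} := by
  classical
  have hleft : (∏ᶠ (a : Fin d → K) (_ : a ≠ 0 ∧ ∃ j : Fin d, (j : ℕ) < i ∧ a j ≠ 0),
      hornerForm m a) =
      ∏ a ∈ univ.filter (fun a : Fin d → K => (fun j => a (Fin.castLE h j)) ≠ 0), hornerForm m a :=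
    finprod_cond_eq_prod_of_cond_iff _ fun {a} _ => by
      rw [mem_filter, comp_castLE_ne_zero_iff, and_iff_right_of_imp]
      · simp
      · rintro ⟨j, -, hj⟩ rfl
        exact hj rfl
  have hright : (∏ᶠ (b : Fin i → K) (_ : b ≠ 0), hornerForm m b) =
      ∏ b ∈ univ.filter (· ≠ 0), hornerForm m b :=
    finprod_cond_eq_prod_of_cond_iff _ fun {b} _ => by simp
  rw [hleft, hright, ← Ideal.Quotient.mk_eq_mk_iff_sub_mem, map_prod, map_pow, map_prod,
    ← prod_filter_comp_castLE h]
  exact prod_congr rfl fun a _ => (Ideal.Quotient.mk_eq_mk_iff_sub_mem _ _).mpr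
    (hornerForm_sub_hornerForm_castLE_mem_span h a hv)

/-- **Congruence for `δ_{d,i}`.**  In `F_q[y_1,…,y_{d-1}]`, the partial product `δ_{d,i}`
(product of `a_0 + a_1 y_1 + ⋯ + a_{d-1} y_1⋯y_{d-1}` over all nonzero `a ∈ F_q^d` with
`a_j ≠ 0` for some `j < i`) is congruent to `δ_i(y_1,…,y_{i-1})^{q^{d-i}}` modulo the
ideal `(y_i)`, where `δ_m` is the product of `a_0 + a_1 y_1 + ⋯ + a_{m-1} y_1⋯y_{m-1}`
over all nonzero `a ∈ F_q^m`. -/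
theorem delta_di_congruence
    (p n d i : ℕ) [Fact p.Prime] (hn : 0 < n) (hi : 1 ≤ i) (hid : i ≤ d - 1) :
    (∏ᶠ (a : Fin d → GaloisField p n)
        (_ : a ≠ 0 ∧ ∃ j : Fin d, (j : ℕ) < i ∧ a j ≠ 0),
      ∑ j : Fin d, C (a j) *
        ∏ t ∈ Finset.univ.filter (fun t : Fin (d-1) => (t : ℕ) < (j : ℕ)),
          (X t : MvPolynomial (Fin (d-1)) (GaloisField p n))) -
    (∏ᶠ (a : Fin i → GaloisField p n) (_ : a ≠ 0),
      ∑ j : Fin i, C (a j) *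
        ∏ t ∈ Finset.univ.filter (fun t : Fin (d-1) => (t : ℕ) < (j : ℕ)),
          (X t : MvPolynomial (Fin (d-1)) (GaloisField p n))) ^ ((p ^ n) ^ (d - i)) ∈
      Ideal.span {(X (⟨i - 1, by omega⟩ : Fin (d-1)) :
        MvPolynomial (Fin (d-1)) (GaloisField p n))} := by
  let := Fintype.ofFinite (GaloisField p n)
  have hq : Fintype.card (GaloisField p n) = p ^ n := by
    rw [Fintype.card_eq_nat_card, GaloisField.card p n hn.ne']
  rw [← hq]
  exact finprod_hornerForm_sub_pow_mem_span (by omega) (Nat.sub_one_lt_of_le hi le_rfl)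
end

section
/- Let u be a d×d upper unitriangular matrix over an algebraically closed field containing F_q whose columns are denoted u_d,…,u_1 (u_i having 1 in position d+1-i and entries u_{1,i},…,u_{d-i,i} above it). Suppose for each 1 ≤ i ≤ d-1 the relations v_i = u_{d-i,i}^q − u_{d-i,i} ≠ 0 and F(u_i) − u_i = v_i · u_{i+1} hold, where F raises each entry to the q-th power. Then the entire matrix u is uniquely determined by its last column u_1. -/
/-! Since `v_i ≠ 0`, the relation `F(u_i) - u_i = v_i • u_{i+1}` expresses the column `u_{i+1}`
as `(F(u_i) - u_i) / v_i`, where `v_i` is itself an entry of `u_i`. So each column is a function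
of the column to its right, and descending induction from the last column recovers `u`. -/

/-- The Lusztig conditions on an upper unitriangular `d × d` matrix `u`: writing
`u_i` for the `(d+1-i)`-th column (0-based index `d-i`), for each `1 ≤ i ≤ d-1` one has
`v_i := u_{d-i,i}^q - u_{d-i,i} ≠ 0` and `F(u_i) - u_i = v_i • u_{i+1}`, where `F` is the
entrywise `q`-power Frobenius. -/
def LusztigCond (q d : ℕ) {K : Type*} [Field K] (u : Matrix (Fin d) (Fin d) K) : Prop :=
  (∀ r c : Fin d, (c : ℕ) < (r : ℕ) → u r c = 0) ∧
  (∀ r : Fin d, u r r = 1) ∧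
  ∀ i : ℕ, ∀ _ : 1 ≤ i, ∀ _ : i ≤ d - 1,
    ((u ⟨d - i - 1, by omega⟩ ⟨d - i, by omega⟩) ^ q -
        u ⟨d - i - 1, by omega⟩ ⟨d - i, by omega⟩ ≠ 0) ∧
    ∀ r : Fin d,
      (u r ⟨d - i, by omega⟩) ^ q - u r ⟨d - i, by omega⟩ =
        ((u ⟨d - i - 1, by omega⟩ ⟨d - i, by omega⟩) ^ q -
            u ⟨d - i - 1, by omega⟩ ⟨d - i, by omega⟩) * u r ⟨d - i - 1, by omega⟩

namespace LusztigCond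

variable {q d : ℕ} {K : Type*} [Field K] {u u' : Matrix (Fin d) (Fin d) K}

theorem apply_eq_div (hu : LusztigCond q d u) (j : ℕ) (hj : j + 1 < d) (r : Fin d) :
    u r ⟨j, by omega⟩ =
      (u r ⟨j + 1, hj⟩ ^ q - u r ⟨j + 1, hj⟩) /
        (u ⟨j, by omega⟩ ⟨j + 1, hj⟩ ^ q - u ⟨j, by omega⟩ ⟨j + 1, hj⟩) := by
  obtain ⟨hv, hrel⟩ := hu.2.2 (d - 1 - j) (by omega) (by omega)
  have hsucc : (⟨d - (d - 1 - j), by omega⟩ : Fin d) = ⟨j + 1, hj⟩ := Fin.mk_eq_mk.2 (by omega)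
  have hpred : (⟨d - (d - 1 - j) - 1, by omega⟩ : Fin d) = ⟨j, by omega⟩ :=
    Fin.mk_eq_mk.2 (by omega)
  rw [hsucc, hpred] at hv hrel
  exact eq_div_of_mul_eq hv ((mul_comm _ _).trans (hrel r).symm)

theorem apply_eq_of_apply_succ_eq (hu : LusztigCond q d u) (hu' : LusztigCond q d u')
    (j : ℕ) (hj : j + 1 < d) (hcol : ∀ r, u r ⟨j + 1, hj⟩ = u' r ⟨j + 1, hj⟩) (r : Fin d) :
    u r ⟨j, by omega⟩ = u' r ⟨j, by omega⟩ := by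
  rw [hu.apply_eq_div j hj, hu'.apply_eq_div j hj, hcol, hcol]

theorem apply_eq_of_col_eq (hu : LusztigCond q d u) (hu' : LusztigCond q d u')
    (j : ℕ) (hj : j < d) (hcol : ∀ r, u r ⟨j, hj⟩ = u' r ⟨j, hj⟩)
    (r c : Fin d) (hc : (c : ℕ) ≤ j) : u r c = u' r c := by
  obtain ⟨c, hcd⟩ := c
  change c ≤ j at hc
  induction hc using Nat.decreasingInduction generalizing r with
  | self => exact hcol r
  | of_succ k _ ih => exact hu.apply_eq_of_apply_succ_eq hu' k (by omega) (fun r => ih r _) r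

end LusztigCond

/-- **Determination by the last column.**  An upper unitriangular matrix `u` over an
algebraically closed field `K ⊇ F_q` of characteristic `p` satisfying the Lusztig
conditions is completely determined by its last column. -/
theorem lusztig_matrix_determined_by_last_column
    (p n d : ℕ) (hd : 0 < d)
    (K : Type*) [Field K]
    (u u' : Matrix (Fin d) (Fin d) K)
    (hu : LusztigCond (p ^ n) d u) (hu' : LusztigCond (p ^ n) d u')
    (hcol : ∀ r : Fin d, u r ⟨d - 1, by omega⟩ = u' r ⟨d - 1, by omega⟩) :
    u = u' :=
  Matrix.ext fun r c => hu.apply_eq_of_col_eq hu' (d - 1) (by omega) hcol r c (by omega)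
end

section
/- Define recursively in the field of rational functions F_q(y_1,…,y_{d-1}): a_{j,1} = (1 − (y_j⋯y_{d-1})^{q-1})/(1 − y_{d-1}^{q-1}) for 1 ≤ j ≤ d−2, and a_{j,k} = (a_{j,k-1}^q − (y_j⋯y_{d-k})^{q^k−q^{k-1}} a_{j,k-1}) / (a_{d-k,k-1}^q − y_{d-k}^{q^k−q^{k-1}} a_{d-k,k-1}) for 1 ≤ j ≤ d−k−1. Then for each j ∈ {1,…,i−1}, a_{j,d-i} can be written as (1 + f)/(1 + g) with f, g polynomials in F_q[y_j,…,y_{d-1}] lying in the ideal (y_j,…,y_{d-1}); in particular, for every n with j ≤ n ≤ d−1, the y_n-adic valuation of a_{j,d-i} is 0. -/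
open MvPolynomial

/-- The rational function field `F_q(y_1,…,y_{d-1})`. -/
abbrev RatField (p n d : ℕ) [Fact p.Prime] :=
  FractionRing (MvPolynomial (Fin (d - 1)) (GaloisField p n))

/-- The variable `y_m` (`1 ≤ m ≤ d-1`) viewed in `F_q(y_1,…,y_{d-1})`. -/
noncomputable def yv (p n d : ℕ) [Fact p.Prime] (m : ℕ) : RatField p n d :=
  if h : 1 ≤ m ∧ m ≤ d - 1 then
    algebraMap (MvPolynomial (Fin (d - 1)) (GaloisField p n)) (RatField p n d)
      (X ⟨m - 1, by omega⟩)
  else 0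

/-- The product `y_j ⋯ y_k`. -/
noncomputable def prodY (p n d : ℕ) [Fact p.Prime] (j k : ℕ) : RatField p n d :=
  ∏ t ∈ Finset.Icc j k, yv p n d t

/-- The recursively defined rational functions `a_{j,k}`:
`a_{j,1} = (1 − (y_j⋯y_{d-1})^{q-1})/(1 − y_{d-1}^{q-1})` and
`a_{j,k} = (a_{j,k-1}^q − (y_j⋯y_{d-k})^{q^k−q^{k-1}} a_{j,k-1}) /
(a_{d-k,k-1}^q − y_{d-k}^{q^k−q^{k-1}} a_{d-k,k-1})`, with `q = p^n`. -/
noncomputable def aRec (p n d : ℕ) [Fact p.Prime] : ℕ → ℕ → RatField p n d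
  | _, 0 => 0
  | j, 1 => (1 - (prodY p n d j (d - 1)) ^ (p ^ n - 1)) /
      (1 - (yv p n d (d - 1)) ^ (p ^ n - 1))
  | j, (k + 2) =>
      ((aRec p n d j (k + 1)) ^ (p ^ n) -
          (prodY p n d j (d - (k + 2))) ^ ((p ^ n) ^ (k + 2) - (p ^ n) ^ (k + 1)) *
            aRec p n d j (k + 1)) /
      ((aRec p n d (d - (k + 2)) (k + 1)) ^ (p ^ n) -
          (yv p n d (d - (k + 2))) ^ ((p ^ n) ^ (k + 2) - (p ^ n) ^ (k + 1)) *
            aRec p n d (d - (k + 2)) (k + 1))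

/-!
Every `a_{j,k}` is a quotient of two polynomials congruent to `1` modulo the ideal
`(y_j,…,y_{d-1})` and involving only `y_j,…,y_{d-1}`. Such polynomials form a multiplicative
monoid `M`, and the fractions `a/b` with `a, b ∈ M` are stable under division and under
`x ↦ x^q - c x` for `c` in the ideal: writing `x = a/b`, one has
`x^q - c x = (a^q b - c a b^q)/b^{q+1}`. Both recursion steps are of this form, and the
coefficients `(y_j⋯y_{d-k})^e`, `y_{d-k}^e` lie in the ideal because `e > 0`. A polynomial
`≡ 1` has constant term `1`, so no variable divides it.
-/

section OneMod

variable {R : Type*} [CommRing R]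

def oneModSubmonoid (I : Ideal R) (S : Subring R) : Submonoid R where
  carrier := {a | a ∈ S ∧ a - 1 ∈ I}
  one_mem' := ⟨S.one_mem, by simp⟩
  mul_mem' {a b} ha hb := ⟨S.mul_mem ha.1 hb.1, by
    have h : a * b - 1 = a * (b - 1) + (a - 1) := by ring
    exact h ▸ I.add_mem (I.mul_mem_left a hb.2) ha.2⟩

variable {I J : Ideal R} {S T : Subring R} {a v : R}

theorem oneModSubmonoid_mono (hIJ : I ≤ J) (hST : S ≤ T) :
    oneModSubmonoid I S ≤ oneModSubmonoid J T :=
  fun _ ha => ⟨hST ha.1, hIJ ha.2⟩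

theorem sub_mem_oneModSubmonoid (ha : a ∈ oneModSubmonoid I S) (hvI : v ∈ I) (hvS : v ∈ S) :
    a - v ∈ oneModSubmonoid I S := by
  refine ⟨S.sub_mem ha.1 hvS, ?_⟩
  rw [sub_right_comm]
  exact I.sub_mem ha.2 hvI

theorem ne_zero_of_mem_oneModSubmonoid (hI : I ≠ ⊤) (ha : a ∈ oneModSubmonoid I S) :
    a ≠ 0 := by
  rintro rfl
  exact hI (I.eq_top_of_isUnit_mem (by simpa using ha.2) isUnit_one.neg)

end OneMod

section Ratio

variable {R F : Type*} [CommRing R] [Field F] [Algebra R F]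

def ratioSet (M : Submonoid R) : Set F :=
  {x | ∃ a ∈ M, ∃ b ∈ M, x = algebraMap R F a / algebraMap R F b}

variable {M N : Submonoid R} {x y : F}

theorem ratioSet_mono (h : M ≤ N) : (ratioSet M : Set F) ⊆ ratioSet N :=
  fun _ ⟨a, ha, b, hb, hx⟩ => ⟨a, h ha, b, h hb, hx⟩

theorem div_mem_ratioSet (hx : x ∈ ratioSet M) (hy : y ∈ ratioSet M) :
    x / y ∈ ratioSet M := by
  obtain ⟨a, ha, b, hb, rfl⟩ := hx
  obtain ⟨c, hc, e, he, rfl⟩ := hy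
  exact ⟨a * e, M.mul_mem ha he, b * c, M.mul_mem hb hc,
    by simp only [map_mul, div_div_div_eq]⟩

theorem pow_sub_mul_mem_ratioSet [IsFractionRing R F] {I : Ideal R} {S : Subring R}
    (hI : I ≠ ⊤) (hx : x ∈ ratioSet (oneModSubmonoid I S)) {c : R} (hcI : c ∈ I) (hcS : c ∈ S)
    (q : ℕ) :
    x ^ q - algebraMap R F c * x ∈ ratioSet (oneModSubmonoid I S) := by
  obtain ⟨a, ha, b, hb, rfl⟩ := hx
  have hb0 : algebraMap R F b ≠ 0 :=
    (map_ne_zero_iff _ (IsFractionRing.injective R F)).mpr (ne_zero_of_mem_oneModSubmonoid hI hb)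
  have habq : a * b ^ q ∈ S := S.mul_mem ha.1 (S.pow_mem hb.1 q)
  refine ⟨a ^ q * b - c * (a * b ^ q),
    sub_mem_oneModSubmonoid (Submonoid.mul_mem _ (Submonoid.pow_mem _ ha q) hb)
      (I.mul_mem_right _ hcI) (S.mul_mem hcS habq),
    b ^ (q + 1), Submonoid.pow_mem _ hb _, ?_⟩
  simp only [map_sub, map_mul, map_pow, div_pow]
  field_simp
  ring

end Ratio

section SpanX

variable {σ K : Type*} [CommRing K] {s : Set σ} {a : MvPolynomial σ K}

theorem constantCoeff_eq_zero_of_mem_span_X_image (ha : a ∈ Ideal.span (X '' s)) :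
    constantCoeff a = 0 :=
  (Ideal.span_le (I := RingHom.ker constantCoeff)).mpr (by rintro _ ⟨i, -, rfl⟩; simp) ha

theorem span_X_image_ne_top [Nontrivial K] :
    Ideal.span (X '' s : Set (MvPolynomial σ K)) ≠ ⊤ := by
  intro h
  have := constantCoeff_eq_zero_of_mem_span_X_image (a := 1) (h ▸ Submodule.mem_top)
  simp at this

theorem not_X_dvd_of_sub_one_mem_span_X_image [Nontrivial K]
    (ha : a - 1 ∈ Ideal.span (X '' s)) (i : σ) : ¬ X i ∣ a := by
  rintro ⟨b, rfl⟩
  exact one_ne_zero (α := K) (by simpa using constantCoeff_eq_zero_of_mem_span_X_image ha)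

end SpanX

section RationalFunctions

variable (p n d : ℕ) [Fact p.Prime]

/-- `t : Fin (d - 1)` stands for `y_{t+1}`, so these are the indices of `y_j,…,y_{d-1}`. -/
def tailVars (j : ℕ) : Set (Fin (d - 1)) := {t | j ≤ (t : ℕ) + 1}

noncomputable def tailIdeal (j : ℕ) : Ideal (MvPolynomial (Fin (d - 1)) (GaloisField p n)) :=
  Ideal.span (X '' tailVars d j)

noncomputable def tailMonoid (j : ℕ) : Submonoid (MvPolynomial (Fin (d - 1)) (GaloisField p n)) :=
  oneModSubmonoid (tailIdeal p n d j) (supported (GaloisField p n) (tailVars d j)).toSubring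

noncomputable def yPoly (m : ℕ) : MvPolynomial (Fin (d - 1)) (GaloisField p n) :=
  if h : 1 ≤ m ∧ m ≤ d - 1 then X ⟨m - 1, by omega⟩ else 0

variable {p n d}

theorem yv_eq_algebraMap_yPoly (m : ℕ) : yv p n d m = algebraMap _ _ (yPoly p n d m) := by
  unfold yv yPoly
  split <;> simp

theorem prodY_eq_algebraMap_prod (j k : ℕ) :
    prodY p n d j k = algebraMap _ _ (∏ t ∈ Finset.Icc j k, yPoly p n d t) := by
  simp only [prodY, map_prod, yv_eq_algebraMap_yPoly]

theorem yPoly_mem_span {j m : ℕ} (hj : 1 ≤ j) (hjm : j ≤ m) (hm : m ≤ d - 1) :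
    yPoly p n d m ∈ tailIdeal p n d j := by
  rw [yPoly, dif_pos ⟨by omega, hm⟩]
  exact Ideal.subset_span ⟨_, show j ≤ m - 1 + 1 by omega, rfl⟩

theorem yPoly_mem_supported {j m : ℕ} (hjm : j ≤ m) :
    yPoly p n d m ∈ supported (GaloisField p n) (tailVars d j) := by
  unfold yPoly
  split_ifs with h
  · exact X_mem_supported.mpr (show j ≤ m - 1 + 1 by omega)
  · exact zero_mem _

theorem prod_yPoly_mem_span {j k : ℕ} (hj : 1 ≤ j) (hjk : j ≤ k) (hk : k ≤ d - 1) :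
    ∏ t ∈ Finset.Icc j k, yPoly p n d t ∈ tailIdeal p n d j :=
  Ideal.mem_of_dvd _ (Finset.dvd_prod_of_mem _ (Finset.mem_Icc.mpr ⟨le_rfl, hjk⟩))
    (yPoly_mem_span hj le_rfl (hjk.trans hk))

theorem prod_yPoly_mem_supported (j k : ℕ) :
    ∏ t ∈ Finset.Icc j k, yPoly p n d t ∈ supported (GaloisField p n) (tailVars d j) :=
  prod_mem fun _ ht => yPoly_mem_supported (Finset.mem_Icc.mp ht).1

theorem tailMonoid_antitone {j j' : ℕ} (h : j ≤ j') :
    tailMonoid p n d j' ≤ tailMonoid p n d j := by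
  have hvars : tailVars d j' ⊆ tailVars d j := fun t ht => h.trans ht
  exact oneModSubmonoid_mono (Ideal.span_mono (Set.image_mono hvars)) (supported_mono hvars)

theorem aRec_one_mem_ratioSet (hn : 0 < n) {j : ℕ} (hj : 1 ≤ j) (hjd : j + 2 ≤ d) :
    aRec p n d j 1 ∈ (ratioSet (tailMonoid p n d j) : Set (RatField p n d)) := by
  have hq : p ^ n - 1 ≠ 0 := by
    have := Nat.one_lt_pow hn.ne' (Fact.out : p.Prime).one_lt
    omega
  refine ⟨1 - (∏ t ∈ Finset.Icc j (d - 1), yPoly p n d t) ^ (p ^ n - 1),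
    sub_mem_oneModSubmonoid (one_mem _)
      (Ideal.pow_mem_of_mem _ (prod_yPoly_mem_span hj (by omega) le_rfl) _ (Nat.pos_of_ne_zero hq))
      (pow_mem (prod_yPoly_mem_supported j (d - 1)) _),
    1 - yPoly p n d (d - 1) ^ (p ^ n - 1),
    sub_mem_oneModSubmonoid (one_mem _)
      (Ideal.pow_mem_of_mem _ (yPoly_mem_span hj (by omega) le_rfl) _ (Nat.pos_of_ne_zero hq))
      (pow_mem (yPoly_mem_supported (by omega)) _), ?_⟩
  simp only [aRec, prodY_eq_algebraMap_prod, yv_eq_algebraMap_yPoly, map_sub, map_one, map_pow]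

theorem aRec_succ_mem_ratioSet (hn : 0 < n) (k : ℕ) :
    ∀ j, 1 ≤ j → j + k + 2 ≤ d →
      aRec p n d j (k + 1) ∈ (ratioSet (tailMonoid p n d j) : Set (RatField p n d)) := by
  induction k with
  | zero => exact fun j hj hjd => aRec_one_mem_ratioSet hn hj hjd
  | succ k ih =>
    intro j hj hjd
    have he : 0 < (p ^ n) ^ (k + 2) - (p ^ n) ^ (k + 1) :=
      Nat.sub_pos_of_lt (Nat.pow_lt_pow_right
        (Nat.one_lt_pow hn.ne' (Fact.out : p.Prime).one_lt) (by omega))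
    have hI : tailIdeal p n d j ≠ ⊤ := span_X_image_ne_top
    have hx := ih j hj (by omega)
    -- the denominator `a_{d-k-2,k+1}` only involves the later variables `y_{d-k-2},…`
    have hx' := ratioSet_mono (tailMonoid_antitone (show j ≤ d - (k + 2) by omega))
      (ih (d - (k + 2)) (by omega) (by omega))
    rw [aRec, prodY_eq_algebraMap_prod, yv_eq_algebraMap_yPoly, ← map_pow, ← map_pow]
    exact div_mem_ratioSet
      (pow_sub_mul_mem_ratioSet hI hx
        (Ideal.pow_mem_of_mem _ (prod_yPoly_mem_span hj (by omega) (by omega)) _ he)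
        (pow_mem (prod_yPoly_mem_supported _ _) _) _)
      (pow_sub_mul_mem_ratioSet hI hx'
        (Ideal.pow_mem_of_mem _ (yPoly_mem_span hj (by omega) (by omega)) _ he)
        (pow_mem (yPoly_mem_supported (by omega)) _) _)

end RationalFunctions

/-- **Unit-valuation form of `a_{j,d-i}`.**  For `1 ≤ j ≤ i-1`, the rational function
`a_{j,d-i}` can be written `(1+f)/(1+g)` with `f, g` polynomials in the variables
`y_j,…,y_{d-1}` lying in the ideal `(y_j,…,y_{d-1})`; in particular for every
`j ≤ m ≤ d-1` the `y_m`-adic valuation of `a_{j,d-i}` is `0`, i.e. `a_{j,d-i}` is a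
ratio of two polynomials neither of which is divisible by `y_m`. -/
theorem aRec_unit_valuation
    (p n d i : ℕ) [Fact p.Prime] (hn : 0 < n) (hd : 2 ≤ d)
    (hid : i ≤ d - 1) :
    ∀ j : ℕ, 1 ≤ j → j ≤ i - 1 →
      (∃ f g : MvPolynomial (Fin (d - 1)) (GaloisField p n),
        f ∈ Ideal.span (X '' {t : Fin (d - 1) | j ≤ (t : ℕ) + 1}) ∧
        g ∈ Ideal.span (X '' {t : Fin (d - 1) | j ≤ (t : ℕ) + 1}) ∧
        (∀ t ∈ f.vars, j ≤ (t : ℕ) + 1) ∧ (∀ t ∈ g.vars, j ≤ (t : ℕ) + 1) ∧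
        aRec p n d j (d - i) =
          algebraMap (MvPolynomial (Fin (d - 1)) (GaloisField p n)) (RatField p n d) (1 + f) /
            algebraMap (MvPolynomial (Fin (d - 1)) (GaloisField p n)) (RatField p n d) (1 + g)) ∧
      ∀ m : ℕ, ∀ _ : j ≤ m, ∀ _ : m ≤ d - 1,
        ∃ A B : MvPolynomial (Fin (d - 1)) (GaloisField p n),
          ¬ (X ⟨m - 1, by omega⟩ ∣ A) ∧ ¬ (X ⟨m - 1, by omega⟩ ∣ B) ∧
          aRec p n d j (d - i) =
            algebraMap (MvPolynomial (Fin (d - 1)) (GaloisField p n)) (RatField p n d) A /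
              algebraMap (MvPolynomial (Fin (d - 1)) (GaloisField p n)) (RatField p n d) B := by
  intro j hj hji
  obtain ⟨a, ⟨haS, haI⟩, b, ⟨hbS, hbI⟩, hab⟩ :=
    Nat.sub_add_cancel (show 1 ≤ d - i by omega) ▸
      aRec_succ_mem_ratioSet (p := p) (d := d) hn (d - i - 1) j hj (by omega)
  have vars_sub_one {c : MvPolynomial (Fin (d - 1)) (GaloisField p n)}
      (hc : c ∈ supported (GaloisField p n) (tailVars d j)) (t) (ht : t ∈ (c - 1).vars) :
      j ≤ (t : ℕ) + 1 :=
    mem_supported.mp (sub_mem hc (one_mem _)) ht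
  refine ⟨⟨a - 1, b - 1, haI, hbI, vars_sub_one haS, vars_sub_one hbS, ?_⟩,
    fun m _ _ => ⟨a, b, not_X_dvd_of_sub_one_mem_span_X_image haI _,
      not_X_dvd_of_sub_one_mem_span_X_image hbI _, hab⟩⟩
  simpa only [add_sub_cancel] using hab
end

section
/- For u = (u_{k,l}) in the set X'(c) of upper unitriangular d×d matrices satisfying the Lusztig conditions (v_i := u_{d-i,i}^q − u_{d-i,i} ≠ 0 and F(u_i) − u_i = v_i u_{i+1} for 1 ≤ i ≤ d−1, where u_i denotes the (d+1−i)-th column), the Lusztig isomorphism L(u) = u·w_Δ·B, where w_Δ is the antidiagonal permutation matrix, corresponds under the identification X(c) ≅ Ω^{d-1} to the point with affine coordinates (u_{1,1},…,u_{d-1,1}); i.e., the inverse of L sends (x_0,…,x_{d-2}) ∈ Ω^{d-1} to the unique u ∈ X'(c) with last column (x_0,…,x_{d-2},1)^t. -/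
open Polynomial

section LusztigPoly

variable {K : Type*} [Field K]

/-- The Lusztig `q`-polynomials: if `y` lists the last column `u_1` of the paper from the bottom
up (`y 0 = 1`), the column `u_{k+1}` is `lusztigPoly q y k` applied entrywise to `u_1`, and
`lusztigConst q y k` below is the paper's `v_{k+1}`. -/
noncomputable def lusztigPoly (q : ℕ) (y : ℕ → K) : ℕ → K[X]
  | 0 => X
  | k + 1 =>
      C (((lusztigPoly q y k).eval (y (k + 1))) ^ q - (lusztigPoly q y k).eval (y (k + 1)))⁻¹ *
        (lusztigPoly q y k ^ q - lusztigPoly q y k)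

noncomputable def lusztigConst (q : ℕ) (y : ℕ → K) (k : ℕ) : K :=
  (lusztigPoly q y k).eval (y (k + 1)) ^ q - (lusztigPoly q y k).eval (y (k + 1))

variable {q : ℕ} {y : ℕ → K}

@[simp]
theorem lusztigPoly_zero : lusztigPoly q y 0 = X :=
  rfl

theorem lusztigPoly_succ (k : ℕ) :
    lusztigPoly q y (k + 1) =
      C (lusztigConst q y k)⁻¹ * (lusztigPoly q y k ^ q - lusztigPoly q y k) :=
  rfl

theorem eval_lusztigPoly_succ (k : ℕ) (s : K) :
    (lusztigPoly q y (k + 1)).eval s =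
      (lusztigConst q y k)⁻¹ *
        ((lusztigPoly q y k).eval s ^ q - (lusztigPoly q y k).eval s) := by
  simp [lusztigPoly_succ]

theorem eval_lusztigPoly_pow_sub_self {k : ℕ} (hk : lusztigConst q y k ≠ 0) (s : K) :
    (lusztigPoly q y k).eval s ^ q - (lusztigPoly q y k).eval s =
      lusztigConst q y k * (lusztigPoly q y (k + 1)).eval s := by
  rw [eval_lusztigPoly_succ, mul_inv_cancel_left₀ hk]

theorem eval_lusztigPoly_self (hy : y 0 = 1) :
    ∀ {k : ℕ}, (∀ j < k, lusztigConst q y j ≠ 0) → (lusztigPoly q y k).eval (y k) = 1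
  | 0, _ => by simp [hy]
  | k + 1, hv => by
      rw [eval_lusztigPoly_succ]
      exact inv_mul_cancel₀ (hv k k.lt_succ_self)

theorem eval_lusztigPoly_of_lt (hq : q ≠ 0) (hy : y 0 = 1) :
    ∀ {k : ℕ}, (∀ j < k, lusztigConst q y j ≠ 0) →
      ∀ j < k, (lusztigPoly q y k).eval (y j) = 0
  | k + 1, hv, j, hj => by
      have hv' : ∀ i < k, lusztigConst q y i ≠ 0 := fun i hi => hv i (hi.trans k.lt_succ_self)
      rw [eval_lusztigPoly_succ]
      rcases (Nat.lt_succ_iff_lt_or_eq.mp hj) with hjk | rfl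
      · rw [eval_lusztigPoly_of_lt hq hy hv' j hjk, zero_pow hq, sub_zero, mul_zero]
      · rw [eval_lusztigPoly_self hy hv', one_pow, sub_self, mul_zero]

theorem natDegree_pow_sub_self {P : K[X]} (hq : 1 < q) (hP : 0 < P.natDegree) :
    (P ^ q - P).natDegree = q * P.natDegree := by
  have hlt : P.natDegree < (P ^ q).natDegree := by
    rw [natDegree_pow]; exact lt_mul_left hP hq
  rw [natDegree_sub_eq_left_of_natDegree_lt hlt, natDegree_pow]

theorem natDegree_lusztigPoly (hq : 1 < q) :
    ∀ {k : ℕ}, (∀ j < k, lusztigConst q y j ≠ 0) → (lusztigPoly q y k).natDegree = q ^ k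
  | 0, _ => natDegree_X
  | k + 1, hv => by
      have hdeg := natDegree_lusztigPoly hq fun j hj => hv j (hj.trans k.lt_succ_self)
      rw [lusztigPoly_succ, natDegree_C_mul (inv_ne_zero (hv k k.lt_succ_self)),
        natDegree_pow_sub_self hq (by rw [hdeg]; positivity), hdeg, pow_succ']

end LusztigPoly

section FiniteField

variable {F K : Type*} [Field F] [Fintype F] [Field K] [Algebra F K]

theorem linearIndependent_of_det_moore_ne_zero {d : ℕ} {x : Fin d → K}
    (hM : (Matrix.of fun i j : Fin d => x i ^ Fintype.card F ^ (j : ℕ)).det ≠ 0) :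
    LinearIndependent F x := by
  classical
  rw [Fintype.linearIndependent_iff]
  intro g hg i
  by_contra hgi
  refine hM (Matrix.exists_vecMul_eq_zero_iff.mp
    ⟨fun i => algebraMap F K (g i), fun h => hgi (by simpa using congrFun h i), ?_⟩)
  funext j
  have := congrArg (FiniteField.frobeniusAlgHom F K ^ (j : ℕ)) hg
  simp only [map_sum, map_zero, AlgHom.coe_pow, FiniteField.coe_frobeniusAlgHom, pow_iterate,
    Algebra.smul_def, mul_pow, ← map_pow, FiniteField.pow_card_pow] at this
  simpa [Matrix.vecMul, dotProduct] using this

theorem pow_card_le_natDegree {ι : Type*} [Fintype ι] {f : K →ₗ[F] K} {Q : K[X]}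
    (hQ : Q ≠ 0) (hf : ∀ s, f s = Q.eval s) {v : ι → K} (hv : LinearIndependent F v)
    (hvf : ∀ i, f (v i) = 0) :
    Fintype.card F ^ Fintype.card ι ≤ Q.natDegree := by
  classical
  have hroots : (Submodule.span F (Set.range v) : Set K) ⊆ Q.roots.toFinset := by
    intro s hs
    have hs' : s ∈ LinearMap.ker f :=
      Submodule.span_le.mpr (Set.range_subset_iff.mpr hvf) hs
    simpa [mem_roots hQ, ← hf] using hs'
  have := FiniteDimensional.span_of_finite F (Set.finite_range v)
  calc Fintype.card F ^ Fintype.card ι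
      = Nat.card (Submodule.span F (Set.range v)) := by
        rw [Module.natCard_eq_pow_finrank (K := F), finrank_span_eq_card hv,
          Nat.card_eq_fintype_card]
    _ ≤ Q.roots.toFinset.card := by
        rw [← Set.ncard_coe_finset]
        exact Set.ncard_le_ncard hroots (Finset.finite_toSet _)
    _ ≤ Multiset.card Q.roots := Multiset.toFinset_card_le _
    _ ≤ Q.natDegree := card_roots' Q

variable (F) in
noncomputable def lusztigLinearMap (y : ℕ → K) : ℕ → K →ₗ[F] K
  | 0 => LinearMap.id
  | k + 1 => (lusztigConst (Fintype.card F) y k)⁻¹ •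
      ((FiniteField.frobeniusAlgHom F K).toLinearMap - LinearMap.id) ∘ₗ lusztigLinearMap y k

theorem lusztigLinearMap_apply (y : ℕ → K) (k : ℕ) (s : K) :
    lusztigLinearMap F y k s = (lusztigPoly (Fintype.card F) y k).eval s := by
  induction k with
  | zero => simp [lusztigLinearMap]
  | succ k ih => simp [lusztigLinearMap, eval_lusztigPoly_succ, ih]

theorem lusztigConst_ne_zero {m : ℕ} {y : ℕ → K} (hy0 : y 0 = 1)
    (hy : LinearIndependent F fun j : Fin m => y j) :
    ∀ k, k + 2 ≤ m → lusztigConst (Fintype.card F) y k ≠ 0 := by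
  intro k
  induction k using Nat.strong_induction_on with
  | _ k ih =>
  intro hk hvk
  set q := Fintype.card F
  have hq : 1 < q := Fintype.one_lt_card
  have hv : ∀ j < k, lusztigConst q y j ≠ 0 := fun j hj => ih j hj (by omega)
  set P := lusztigPoly q y k
  set f : K →ₗ[F] K :=
    ((FiniteField.frobeniusAlgHom F K).toLinearMap - LinearMap.id) ∘ₗ lusztigLinearMap F y k
  have hf : ∀ s, f s = (P ^ q - P).eval s := fun s => by simp [f, lusztigLinearMap_apply, P, q]
  have hroot : ∀ j : Fin (k + 2), f (y j) = 0 := by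
    intro j
    rw [hf, eval_sub, eval_pow]
    rcases lt_trichotomy (j : ℕ) k with hj | hj | hj
    · rw [eval_lusztigPoly_of_lt (by omega) hy0 hv j hj, zero_pow (by omega), sub_zero]
    · rw [hj, eval_lusztigPoly_self hy0 hv, one_pow, sub_self]
    · rw [show (j : ℕ) = k + 1 by omega]
      exact hvk
  have hdeg : (P ^ q - P).natDegree = q ^ (k + 1) := by
    rw [natDegree_pow_sub_self hq (by rw [natDegree_lusztigPoly hq hv]; positivity),
      natDegree_lusztigPoly hq hv, pow_succ']
  have hQ : P ^ q - P ≠ 0 := ne_zero_of_natDegree_gt (n := 0) (by rw [hdeg]; positivity)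
  have hcard := pow_card_le_natDegree hQ hf
    (hy.comp (Fin.castLE hk) (Fin.castLE_injective hk)) hroot
  rw [Fintype.card_fin, hdeg] at hcard
  exact absurd hcard (Nat.pow_lt_pow_right hq (by omega)).not_ge

end FiniteField

section LusztigMatrix

variable {K : Type*} [Field K] {q d : ℕ}

theorem lusztigCond_iff {u : Matrix (Fin d) (Fin d) K} :
    LusztigCond q d u ↔
      (∀ r c : Fin d, (c : ℕ) < (r : ℕ) → u r c = 0) ∧ (∀ r : Fin d, u r r = 1) ∧
      ∀ k (hk : k + 1 < d),
        u (Fin.rev ⟨k + 1, hk⟩) (Fin.rev ⟨k, by omega⟩) ^ q -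
            u (Fin.rev ⟨k + 1, hk⟩) (Fin.rev ⟨k, by omega⟩) ≠ 0 ∧
        ∀ r : Fin d, u r (Fin.rev ⟨k, by omega⟩) ^ q - u r (Fin.rev ⟨k, by omega⟩) =
          (u (Fin.rev ⟨k + 1, hk⟩) (Fin.rev ⟨k, by omega⟩) ^ q -
            u (Fin.rev ⟨k + 1, hk⟩) (Fin.rev ⟨k, by omega⟩)) *
            u r (Fin.rev ⟨k + 1, hk⟩) := by
  refine and_congr_right fun _ => and_congr_right fun _ =>
    ⟨fun h k hk => ?_, fun h i hi hid => ?_⟩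
  · have e₁ : (⟨d - (k + 1), by omega⟩ : Fin d) = Fin.rev ⟨k, by omega⟩ := by ext; simp
    have e₂ : (⟨d - (k + 1) - 1, by omega⟩ : Fin d) = Fin.rev ⟨k + 1, hk⟩ := by
      ext; simp only [Fin.val_rev]; omega
    have := h (k + 1) (by omega) (by omega)
    rwa [e₁, e₂] at this
  · obtain ⟨k, rfl⟩ : ∃ k, i = k + 1 := ⟨i - 1, by omega⟩
    have e₁ : (⟨d - (k + 1), by omega⟩ : Fin d) = Fin.rev ⟨k, by omega⟩ := by ext; simp
    have e₂ : (⟨d - (k + 1) - 1, by omega⟩ : Fin d) = Fin.rev ⟨k + 1, by omega⟩ := by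
      ext; simp only [Fin.val_rev]; omega
    rw [e₁, e₂]
    exact h k (by omega)

variable (q d) in
noncomputable def lusztigMatrix (y : ℕ → K) : Matrix (Fin d) (Fin d) K :=
  Matrix.of fun r c => (lusztigPoly q y c.rev).eval (y r.rev)

theorem lusztigCond_lusztigMatrix (hq : q ≠ 0) {y : ℕ → K} (hy0 : y 0 = 1)
    (hv : ∀ k, k + 2 ≤ d → lusztigConst q y k ≠ 0) :
    LusztigCond q d (lusztigMatrix q d y) := by
  have hv' : ∀ c : Fin d, ∀ j < (c.rev : ℕ), lusztigConst q y j ≠ 0 :=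
    fun c j hj => hv j (by have := c.rev.isLt; omega)
  refine lusztigCond_iff.mpr ⟨fun r c hcr => ?_, fun r => ?_, fun k hk => ?_⟩
  · exact eval_lusztigPoly_of_lt hq hy0 (hv' c) _ (by simp only [Fin.val_rev]; omega)
  · exact eval_lusztigPoly_self hy0 (hv' r)
  · simp only [lusztigMatrix, Matrix.of_apply, Fin.rev_rev]
    exact ⟨hv k (by omega), fun r => eval_lusztigPoly_pow_sub_self (hv k (by omega)) _⟩

theorem eq_lusztigMatrix_of_lusztigCond {u : Matrix (Fin d) (Fin d) K} (hu : LusztigCond q d u)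
    (hd : 0 < d) {y : ℕ → K} (hlast : ∀ r, u r (Fin.rev ⟨0, hd⟩) = y r.rev) :
    u = lusztigMatrix q d y := by
  have hcol : ∀ k (hk : k < d) r,
      u r (Fin.rev ⟨k, hk⟩) = (lusztigPoly q y k).eval (y r.rev) := by
    intro k
    induction k with
    | zero => intro _ r; simpa using hlast r
    | succ k ih =>
      intro hk r
      obtain ⟨hv, hrec⟩ := (lusztigCond_iff.mp hu).2.2 k hk
      simp only [ih, Fin.rev_rev] at hv hrec
      change lusztigConst q y k ≠ 0 at hv
      exact (mul_left_cancel₀ hv ((eval_lusztigPoly_pow_sub_self hv _).symm.trans (hrec r))).symm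
  ext r c
  have := hcol c.rev c.rev.isLt r
  rwa [Fin.eta, Fin.rev_rev] at this

end LusztigMatrix

theorem mul_antidiagonal_apply {R : Type*} [NonAssocSemiring R] {d : ℕ}
    (A : Matrix (Fin d) (Fin d) R) (r c : Fin d) :
    (A * Matrix.of fun i j : Fin d => if (i : ℕ) + (j : ℕ) = d - 1 then (1 : R) else 0) r c =
      A r c.rev := by
  rw [Matrix.mul_apply, Finset.sum_eq_single c.rev]
  · rw [Matrix.of_apply, if_pos (by rw [Fin.val_rev]; omega), mul_one]
  · intro j _ hj
    rw [Matrix.of_apply, if_neg fun h => hj (Fin.ext (by rw [Fin.val_rev]; omega)), mul_zero]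
  · simp

/-- **The Lusztig isomorphism in coordinates.**  For `u ∈ X'(c)`, the first column of
`u·w_Δ` (the homogeneous coordinates of `L(u) = u w_Δ B` under the identification
`X(c) ≅ Ω^{d-1}`) is exactly the last column `(u_{1,1},…,u_{d-1,1},1)ᵗ` of `u`;
conversely the inverse of `L` sends a point `(x_0,…,x_{d-2})` of `Ω^{d-1}` (i.e. with
nonvanishing Moore determinant of `(x_0,…,x_{d-2},1)`) to the *unique* `u ∈ X'(c)` whose
last column is `(x_0,…,x_{d-2},1)ᵗ`. -/
theorem lusztig_iso_coordinates
    (p n d : ℕ) [Fact p.Prime] (hn : 0 < n) (hd : 0 < d)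
    (K : Type*) [Field K] [Algebra (GaloisField p n) K] :
    (∀ u : Matrix (Fin d) (Fin d) K, LusztigCond (p ^ n) d u →
      ∀ r : Fin d,
        (u * Matrix.of fun i j : Fin d => if (i : ℕ) + (j : ℕ) = d - 1 then (1 : K) else 0)
            r ⟨0, hd⟩ = u r ⟨d - 1, by omega⟩) ∧
    (∀ x : Fin d → K, x ⟨d - 1, by omega⟩ = 1 →
      Matrix.det (Matrix.of fun i j : Fin d => x i ^ (p ^ n) ^ (j : ℕ)) ≠ 0 →
        ∃! u : Matrix (Fin d) (Fin d) K,
          LusztigCond (p ^ n) d u ∧ ∀ r : Fin d, u r ⟨d - 1, by omega⟩ = x r) := by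
  have hlast : (Fin.rev ⟨0, hd⟩ : Fin d) = ⟨d - 1, by omega⟩ := by ext; simp
  refine ⟨fun u _ r => by rw [mul_antidiagonal_apply, hlast], fun x hx1 hM => ?_⟩
  let _ := Fintype.ofFinite (GaloisField p n)
  have hcard : Fintype.card (GaloisField p n) = p ^ n := by
    rw [Fintype.card_eq_nat_card, GaloisField.card p n hn.ne']
  set y : ℕ → K := fun j => x ⟨d - 1 - j, by omega⟩
  have hxy : ∀ r, x r = y r.rev := fun r => congrArg x (by ext; simp only [Fin.val_rev]; omega)
  have hindep : LinearIndependent (GaloisField p n) fun j : Fin d => y j := by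
    have := (linearIndependent_of_det_moore_ne_zero (hcard ▸ hM)).comp _ Fin.rev_injective
    convert this using 1
    funext j
    exact congrArg x (by ext; simp only [Fin.val_rev]; omega)
  have hv := hcard ▸ lusztigConst_ne_zero (show y 0 = 1 from hx1) hindep
  refine ⟨lusztigMatrix (p ^ n) d y, ⟨lusztigCond_lusztigMatrix ?_ hx1 hv, fun r => ?_⟩, ?_⟩
  · exact pow_ne_zero n (Fact.out : p.Prime).ne_zero
  · rw [← hlast, hxy]
    simp only [lusztigMatrix, Matrix.of_apply, Fin.rev_rev, lusztigPoly_zero, eval_X]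
  · rintro u ⟨hu, hux⟩
    exact eq_lusztigMatrix_of_lusztigCond hu hd fun r => by rw [hlast, hux, hxy]
end
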